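/- Proposition (SRI vs. symmetrized reference-invariant GE, case α > 1): for every real α > 1, α·SR_α(p̄, q̄) ≤ α·SD_α(p̄, q̄), where p̄_j = p_j/Σ_k p_k, q̄_j = q_j/Σ_k q_k, and r̄_j = q̄_j/p̄_j. -/

import Mathlib

/-!
With `A = Σ_j p̄_j r̄_j^{1-α}` and `B = Σ_j p̄_j r̄_j^{α}`, both sides are multiples of the same
positive constant `1/(2(α-1))`: of `ln (A B)` on the left and of `A + B - 2` on the right. The
inequality is therefore `ln A + ln B ≤ (A - 1) + (B - 1)`, i.e. `ln x ≤ x - 1` applied twice.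
-/

/-- Symmetrized Rényi index on the normalized distributions
`p̄_j = p_j/Σ p`, `q̄_j = q_j/Σ q`, `r̄_j = q̄_j/p̄_j`:
`SR_α(p̄,q̄) = −(1/(2α(1−α)))·ln[(Σ_j p̄_j r̄_j^{1−α})·(Σ_j p̄_j r̄_j^{α})]`. -/
noncomputable def symRenyiBar (m : ℕ) (α : ℝ) (p q : Fin m → ℝ) : ℝ :=
  -(1 / (2 * α * (1 - α))) *
    Real.log
      ((∑ j, (p j / ∑ k, p k) * ((q j / ∑ k, q k) / (p j / ∑ k, p k)) ^ (1 - α)) *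
       (∑ j, (p j / ∑ k, p k) * ((q j / ∑ k, q k) / (p j / ∑ k, p k)) ^ α))

/-- Symmetrized reference-invariant GE index on the normalized distributions:
`SD_α(p̄,q̄) = (1/(α(1−α))) · [1 − (1/2) Σ_j p̄_j (r̄_j^{1−α} + r̄_j^{α})]`. -/
noncomputable def symGEBar (m : ℕ) (α : ℝ) (p q : Fin m → ℝ) : ℝ :=
  (1 / (α * (1 - α))) *
    (1 - (1 / 2) * ∑ j, (p j / ∑ k, p k) *
      (((q j / ∑ k, q k) / (p j / ∑ k, p k)) ^ (1 - α) +
       ((q j / ∑ k, q k) / (p j / ∑ k, p k)) ^ α))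

theorem Real.log_mul_le_add_sub_two {a b : ℝ} (ha : 0 < a) (hb : 0 < b) :
    Real.log (a * b) ≤ a + b - 2 := by
  rw [Real.log_mul ha.ne' hb.ne']
  linarith [Real.log_le_sub_one_of_pos ha, Real.log_le_sub_one_of_pos hb]

section RatioMoment

variable {ι : Type*} [Fintype ι]

noncomputable def ratioMoment (p q : ι → ℝ) (s : ℝ) : ℝ :=
  ∑ j, (p j / ∑ k, p k) * ((q j / ∑ k, q k) / (p j / ∑ k, p k)) ^ s

theorem ratioMoment_pos [Nonempty ι] {p q : ι → ℝ} (hp : ∀ j, 0 < p j) (hq : ∀ j, 0 < q j)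
    (s : ℝ) : 0 < ratioMoment p q s := by
  have hpsum : 0 < ∑ k, p k := Finset.sum_pos (fun j _ => hp j) Finset.univ_nonempty
  have hqsum : 0 < ∑ k, q k := Finset.sum_pos (fun j _ => hq j) Finset.univ_nonempty
  refine Finset.sum_pos (fun j _ => ?_) Finset.univ_nonempty
  have hpj : 0 < p j / ∑ k, p k := div_pos (hp j) hpsum
  exact mul_pos hpj (Real.rpow_pos_of_pos (div_pos (div_pos (hq j) hqsum) hpj) s)

end RatioMoment

theorem symRenyiBar_eq_ratioMoment (m : ℕ) (α : ℝ) (p q : Fin m → ℝ) :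
    symRenyiBar m α p q =
      -(1 / (2 * α * (1 - α))) * Real.log (ratioMoment p q (1 - α) * ratioMoment p q α) :=
  rfl

theorem symGEBar_eq_ratioMoment (m : ℕ) (α : ℝ) (p q : Fin m → ℝ) :
    symGEBar m α p q =
      1 / (α * (1 - α)) * (1 - (ratioMoment p q (1 - α) + ratioMoment p q α) / 2) := by
  simp only [symGEBar, ratioMoment, mul_add, Finset.sum_add_distrib]
  ring

/-- SRI vs. symmetrized reference-invariant GE, case `α > 1`:
`α·SR_α(p̄,q̄) ≤ α·SD_α(p̄,q̄)`. -/
theorem symRenyiBar_le_symGEBar (m : ℕ) (hm : 1 ≤ m) (p q : Fin m → ℝ)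
    (hp : ∀ j, 0 < p j) (hq : ∀ j, 0 < q j)
    (α : ℝ) (hα : 1 < α) :
    α * symRenyiBar m α p q ≤ α * symGEBar m α p q := by
  have : Nonempty (Fin m) := Fin.pos_iff_nonempty.mp hm
  rw [symRenyiBar_eq_ratioMoment, symGEBar_eq_ratioMoment]
  set A := ratioMoment p q (1 - α)
  set B := ratioMoment p q α
  have hlog : Real.log (A * B) ≤ A + B - 2 :=
    Real.log_mul_le_add_sub_two (ratioMoment_pos hp hq _) (ratioMoment_pos hp hq _)
  have hα0 : α ≠ 0 := by positivity
  have hα1 : α - 1 ≠ 0 := by linarith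
  have h1α : 1 - α ≠ 0 := by linarith
  calc α * (-(1 / (2 * α * (1 - α))) * Real.log (A * B))
      = Real.log (A * B) / (2 * (α - 1)) := by field_simp; ring
    _ ≤ (A + B - 2) / (2 * (α - 1)) := by gcongr
    _ = α * (1 / (α * (1 - α)) * (1 - (A + B) / 2)) := by field_simp; ring
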